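/- arXiv:2601.11009 — 4 statements merged into one kernel-verified Lean document; each statement's English description precedes it below -/
import Mathlib

section
/- Let P be the complete lattice obtained from countably many disjoint copies of the extended negative integers {-∞, ..., -3, -2, -1}, glued together at -∞ (bottom) and -1 (top). Then P, equipped with the upper topology, is a sober space with a countable open set lattice, but the open set lattice of P is not a continuous lattice. -/
open Set

section RelDefs
variable {α : Type*} (r : α → α → Prop)

/-- `D` is a (nonempty) directed subset with respect to the relation `r`. -/
def DirOn (D : Set α) : Prop :=
  D.Nonempty ∧ ∀ a ∈ D, ∀ b ∈ D, ∃ c ∈ D, r a c ∧ r b c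

/-- `s` is a least upper bound of `D` with respect to `r`. -/
def IsLubR (D : Set α) (s : α) : Prop :=
  (∀ d ∈ D, r d s) ∧ ∀ u, (∀ d ∈ D, r d u) → r s u

/-- `x` is way-below `y` with respect to `r`. -/
def WB (x y : α) : Prop :=
  ∀ D : Set α, DirOn r D → ∀ s, IsLubR r D s → r y s → ∃ d ∈ D, r x d

/-- Every directed subset has a least upper bound (dcpo property). -/
def DcpoRel : Prop := ∀ D : Set α, DirOn r D → ∃ s, IsLubR r D s

/-- Continuity: every element is the directed least upper bound of the elements way-below it. -/
def ContinuousRel : Prop :=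
  ∀ y, DirOn r {x | WB r x y} ∧ IsLubR r {x | WB r x y} y

/-- Algebraicity: every element is the directed least upper bound of
the compact elements (`WB r x x`) below it. -/
def AlgebraicRel : Prop :=
  ∀ y, DirOn r {x | WB r x x ∧ r x y} ∧ IsLubR r {x | WB r x x ∧ r x y} y

/-- Upper set generated by `F` with respect to `r`. -/
def UpS (F : Set α) : Set α := {x | ∃ f ∈ F, r f x}

/-- The set `F` is way-below the set `G` with respect to `r`. -/
def SetWB (F G : Set α) : Prop :=
  ∀ D : Set α, DirOn r D → ∀ s, IsLubR r D s → s ∈ UpS r G → ∃ d ∈ D, d ∈ UpS r F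

/-- Finite sets way-below `x`. -/
def FinFam (x : α) : Set (Finset α) := {F | SetWB r (F : Set α) {x}}

/-- Finite sets `F` with `F ≪ F ≪ x`. -/
def FinFamC (x : α) : Set (Finset α) :=
  {F | SetWB r (F : Set α) (F : Set α) ∧ SetWB r (F : Set α) {x}}

/-- Directedness of a family of finite sets in the Smyth preorder
(`F ⊑ G` iff `G ⊆ ↑F`). -/
def SmythDirected (S : Set (Finset α)) : Prop :=
  S.Nonempty ∧ ∀ F ∈ S, ∀ G ∈ S, ∃ H ∈ S,
    (H : Set α) ⊆ UpS r (F : Set α) ∧ (H : Set α) ⊆ UpS r (G : Set α)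

/-- Quasicontinuity with respect to `r`. -/
def QuasicontinuousRel : Prop :=
  ∀ x, SmythDirected r (FinFam r x) ∧
    UpS r {x} = ⋂ F ∈ FinFam r x, UpS r (F : Set α)

/-- Quasialgebraicity with respect to `r`. -/
def QuasialgebraicRel : Prop :=
  ∀ x, SmythDirected r (FinFamC r x) ∧
    UpS r {x} = ⋂ F ∈ FinFamC r x, UpS r (F : Set α)

/-- `U` is Scott open with respect to `r`: an upper set inaccessible by
least upper bounds of directed sets. -/
def IsScottOpenRel (U : Set α) : Prop :=
  (∀ x ∈ U, ∀ y, r x y → y ∈ U) ∧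
    ∀ D : Set α, DirOn r D → ∀ s, IsLubR r D s → s ∈ U → ∃ d ∈ D, d ∈ U

end RelDefs

section Spec
variable {X : Type*} [TopologicalSpace X]

/-- The specialization order: `x ≤ y` iff `x ∈ cl {y}`. -/
def sle (x y : X) : Prop := x ∈ closure ({y} : Set X)

/-- The maximal elements of `C` with respect to the specialization order. -/
def maxSpec (C : Set X) : Set X := {c | c ∈ C ∧ ∀ y ∈ C, sle c y → sle y c}

end Spec

/-- One "column": `(i, n)` represents the element `-(n+2)` of the `i`-th copy of
the negative integers (without the glued top `-1` and bottom `-∞`). -/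
def NegCol : Type := ℕ × ℕ

/-- `(i, m) ≤ (j, n)` iff they lie in the same column (`i = j`) and `-(m+2) ≤ -(n+2)`,
i.e. `n ≤ m`. -/
instance : PartialOrder NegCol where
  le a b := a.1 = b.1 ∧ b.2 ≤ a.2
  le_refl a := ⟨rfl, le_rfl⟩
  le_trans a b c hab hbc := ⟨hab.1.trans hbc.1, hbc.2.trans hab.2⟩
  le_antisymm a b hab hba := Prod.ext hab.1 (le_antisymm hba.2 hab.2)

/-- The lattice `P`: countably many copies of the negative integers glued
at the top `-1` (`⊤`) and the bottom `-∞` (`⊥`). -/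
def PGlued : Type := WithBot (WithTop NegCol)

instance : PartialOrder PGlued := by unfold PGlued; infer_instance

/-- The upper topology on `PGlued`: subbasic closed sets are the sets `↓F`, `F` finite. -/
instance : TopologicalSpace PGlued :=
  TopologicalSpace.generateFrom
    {s : Set PGlued | ∃ F : Finset PGlued, s = {x | ∃ f ∈ F, x ≤ f}ᶜ}

namespace PAux

def mkN (c m : ℕ) : NegCol := (c, m)

def pbot : PGlued := (⊥ : WithBot (WithTop NegCol))
def ptop : PGlued := ((⊤ : WithTop NegCol) : WithBot (WithTop NegCol))
def emb (c m : ℕ) : PGlued := ((mkN c m : WithTop NegCol) : WithBot (WithTop NegCol))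

lemma mkN_le_mkN {c m c' m' : ℕ} : mkN c m ≤ mkN c' m' ↔ c = c' ∧ m' ≤ m := by
  have h : ∀ a b : NegCol, a ≤ b ↔ a.1 = b.1 ∧ b.2 ≤ a.2 := fun a b => ⟨fun h => h, fun h => h⟩
  rw [h]
  simp [mkN]

lemma pcases (x : PGlued) : x = pbot ∨ x = ptop ∨ ∃ c m, x = emb c m := by
  obtain (_|y) := (x : WithBot (WithTop NegCol))
  · exact Or.inl rfl
  · obtain (_|p) := y
    · exact Or.inr (Or.inl rfl)
    · exact Or.inr (Or.inr ⟨p.1, p.2, rfl⟩)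

lemma pbot_le (x : PGlued) : pbot ≤ x := bot_le (α := WithBot (WithTop NegCol))

lemma le_pbot {x : PGlued} : x ≤ pbot ↔ x = pbot :=
  le_bot_iff (α := WithBot (WithTop NegCol))

lemma le_ptop (x : PGlued) : x ≤ ptop := by
  obtain (_|x) := (x : WithBot (WithTop NegCol))
  · exact bot_le (α := WithBot (WithTop NegCol))
  · exact WithBot.coe_le_coe.2 (le_top (α := WithTop NegCol))

lemma ptop_le {x : PGlued} : ptop ≤ x ↔ x = ptop :=
  ⟨fun h => le_antisymm (le_ptop x) h, fun h => h ▸ le_refl _⟩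

lemma emb_le_emb {c m c' m' : ℕ} : emb c m ≤ emb c' m' ↔ c = c' ∧ m' ≤ m := by
  show ((mkN c m : WithTop NegCol) : WithBot (WithTop NegCol)) ≤
      ((mkN c' m' : WithTop NegCol) : WithBot (WithTop NegCol)) ↔ _
  rw [WithBot.coe_le_coe, WithTop.coe_le_coe]
  exact mkN_le_mkN

lemma emb_ne_pbot {c m : ℕ} : emb c m ≠ pbot := WithBot.coe_ne_bot

lemma emb_ne_ptop {c m : ℕ} : emb c m ≠ ptop := by
  intro h
  have : (mkN c m : WithTop NegCol) = ⊤ := WithBot.coe_injective h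
  exact WithTop.coe_ne_top this

lemma ptop_ne_pbot : ptop ≠ pbot := WithBot.coe_ne_bot

lemma not_emb_le_pbot {c m : ℕ} : ¬ emb c m ≤ pbot := fun h => emb_ne_pbot (le_pbot.1 h)

lemma not_ptop_le_emb {c m : ℕ} : ¬ ptop ≤ emb c m := fun h => emb_ne_ptop (ptop_le.1 h)

lemma le_emb {x : PGlued} {c m : ℕ} : x ≤ emb c m ↔ x = pbot ∨ ∃ m', m ≤ m' ∧ x = emb c m' := by
  constructor
  · intro h
    rcases pcases x with rfl | rfl | ⟨c', m', rfl⟩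
    · exact Or.inl rfl
    · exact absurd h not_ptop_le_emb
    · obtain ⟨rfl, hm⟩ := emb_le_emb.1 h
      exact Or.inr ⟨m', hm, rfl⟩
  · rintro (rfl | ⟨m', hm, rfl⟩)
    · exact pbot_le _
    · exact emb_le_emb.2 ⟨rfl, hm⟩


noncomputable instance : DecidableEq PGlued := Classical.decEq _

def low (F : Finset PGlued) : Set PGlued := {x | ∃ f ∈ F, x ≤ f}

lemma isOpen_compl_low (F : Finset PGlued) : IsOpen (low F)ᶜ :=
  TopologicalSpace.GenerateOpen.basic _ ⟨F, rfl⟩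

lemma isClosed_low (F : Finset PGlued) : IsClosed (low F) :=
  ⟨isOpen_compl_low F⟩

lemma low_down {F : Finset PGlued} {x y : PGlued} (hxy : x ≤ y) (hy : y ∈ low F) :
    x ∈ low F := by
  obtain ⟨f, hf, hle⟩ := hy
  exact ⟨f, hf, hxy.trans hle⟩

lemma low_union (F G : Finset PGlued) : low (F ∪ G) = low F ∪ low G := by
  ext x
  simp only [low, Finset.mem_union, mem_setOf_eq, mem_union]
  constructor
  · rintro ⟨f, (hf | hf), hle⟩
    · exact Or.inl ⟨f, hf, hle⟩
    · exact Or.inr ⟨f, hf, hle⟩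
  · rintro (⟨f, hf, hle⟩ | ⟨f, hf, hle⟩)
    · exact ⟨f, Or.inl hf, hle⟩
    · exact ⟨f, Or.inr hf, hle⟩

/-- The column index of a point (0 for the glued top and bottom). -/
def colIdx : PGlued → ℕ := fun x =>
  match (x : WithBot (WithTop NegCol)) with
  | some (some p) => p.1
  | _ => 0

lemma colIdx_emb (c m : ℕ) : colIdx (emb c m) = c := rfl

/-- Every open set of `PGlued` is the complement of `low F` for some finite `F`. -/
lemma open_char {X : Set PGlued} (h : IsOpen X) : ∃ F : Finset PGlued, X = (low F)ᶜ := by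
  classical
  have h' : TopologicalSpace.GenerateOpen
      {s : Set PGlued | ∃ F : Finset PGlued, s = (low F)ᶜ} X := h
  clear h
  induction h' with
  | basic s hs => exact hs
  | univ =>
      refine ⟨∅, ?_⟩
      have : low (∅ : Finset PGlued) = ∅ := by
        ext x; simp [low]
      rw [this, compl_empty]
  | inter X Y hX hY ihX ihY =>
      obtain ⟨F, rfl⟩ := ihX
      obtain ⟨G, rfl⟩ := ihY
      exact ⟨F ∪ G, by rw [low_union, compl_union]⟩
  | sUnion S hS ih =>
      choose Fs hFs using ih
      set C := (⋃₀ S)ᶜ with hCdef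
      have hCs : ∀ x, x ∈ C ↔ ∀ s (hs : s ∈ S), x ∈ low (Fs s hs) := by
        intro x
        constructor
        · intro hx s hs
          have : x ∉ s := fun hxs => hx ⟨s, hs, hxs⟩
          rw [hFs s hs] at this
          simpa using this
        · intro hx
          rintro ⟨s, hs, hxs⟩
          rw [hFs s hs] at hxs
          exact hxs (hx s hs)
      have hCdown : ∀ {x y : PGlued}, x ≤ y → y ∈ C → x ∈ C := by
        intro x y hxy hy
        rw [hCs] at hy ⊢
        exact fun s hs => low_down hxy (hy s hs)
      by_cases htop : ptop ∈ C
      · refine ⟨{ptop}, ?_⟩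
        have hSempty : ⋃₀ S = ∅ := by
          rw [eq_empty_iff_forall_notMem]
          rintro x ⟨s, hs, hxs⟩
          have h1 : ptop ∈ low (Fs s hs) := (hCs ptop).1 htop s hs
          obtain ⟨f, hf, hle⟩ := h1
          have : x ∈ low (Fs s hs) := ⟨f, hf, (le_ptop x).trans hle⟩
          rw [hFs s hs] at hxs
          exact hxs this
        rw [hSempty]
        have : low ({ptop} : Finset PGlued) = univ := by
          ext x; simp [low, le_ptop]
        rw [this, compl_univ]
      by_cases hbot : pbot ∈ C
      swap
      · refine ⟨∅, ?_⟩
        have : low (∅ : Finset PGlued) = ∅ := by ext x; simp [low]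
        rw [this, compl_empty, eq_univ_iff_forall]
        intro x
        by_contra hx
        exact hbot (hCdown (pbot_le x) hx)
      -- main case: ptop ∉ C, pbot ∈ C
      obtain ⟨s₀, hs₀, hts₀⟩ : ∃ s ∈ S, ptop ∈ s := by
        have : ptop ∈ ⋃₀ S := by
          by_contra hx; exact htop hx
        simpa using this
      have hCF₀ : C ⊆ low (Fs s₀ hs₀) := fun x hx => (hCs x).1 hx s₀ hs₀
      have htopF₀ : ∀ f ∈ Fs s₀ hs₀, ¬ ptop ≤ f := by
        intro f hf hle
        have : ptop ∈ low (Fs s₀ hs₀) := ⟨f, hf, hle⟩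
        rw [hFs s₀ hs₀] at hts₀
        exact hts₀ this
      set K : Finset ℕ := (Fs s₀ hs₀).image colIdx with hK
      have hcolK : ∀ c m, emb c m ∈ low (Fs s₀ hs₀) → c ∈ K := by
        intro c m ⟨f, hf, hle⟩
        rcases pcases f with rfl | rfl | ⟨c', m', rfl⟩
        · exact absurd hle not_emb_le_pbot
        · exact absurd (le_ptop _) (htopF₀ _ hf)
        · obtain ⟨rfl, -⟩ := emb_le_emb.1 hle
          exact Finset.mem_image.2 ⟨_, hf, colIdx_emb _ _⟩
      set f' : ℕ → PGlued :=
        fun c => if h : ∃ m, emb c m ∈ C then emb c (Nat.find h) else pbot with hf'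
      refine ⟨insert pbot (K.image f'), ?_⟩
      have hlowC : low (insert pbot (K.image f')) = C := by
        apply Subset.antisymm
        · rintro x ⟨f, hf, hle⟩
          rcases Finset.mem_insert.1 hf with rfl | hf
          · rwa [le_pbot.1 hle]
          · obtain ⟨c, hc, rfl⟩ := Finset.mem_image.1 hf
            by_cases h : ∃ m, emb c m ∈ C
            · simp only [hf', dif_pos h] at hle
              exact hCdown hle (Nat.find_spec h)
            · simp only [hf', dif_neg h] at hle
              rwa [le_pbot.1 hle]
        · intro x hx
          rcases pcases x with rfl | rfl | ⟨c, m, rfl⟩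
          · exact ⟨pbot, Finset.mem_insert_self _ _, le_refl _⟩
          · exact absurd hx htop
          · have hcK : c ∈ K := hcolK c m (hCF₀ hx)
            have h : ∃ m', emb c m' ∈ C := ⟨m, hx⟩
            refine ⟨f' c, Finset.mem_insert.2 (Or.inr (Finset.mem_image.2 ⟨c, hcK, rfl⟩)), ?_⟩
            simp only [hf', dif_pos h]
            exact emb_le_emb.2 ⟨rfl, Nat.find_min' h hx⟩
      rw [hlowC]
      exact (compl_compl _).symm


lemma closure_singleton (x : PGlued) : closure ({x} : Set PGlued) = low {x} := by
  apply Subset.antisymm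
  · exact closure_minimal (by intro y hy; rw [hy]; exact ⟨x, Finset.mem_singleton_self x, le_refl x⟩)
      (isClosed_low _)
  · obtain ⟨F, hF⟩ := open_char (isClosed_closure (s := ({x} : Set PGlued))).isOpen_compl
    have hcl : closure ({x} : Set PGlued) = low F := by
      rw [← compl_compl (closure ({x} : Set PGlued)), hF, compl_compl]
    rintro y ⟨f, hf, hle⟩
    rw [Finset.mem_singleton] at hf
    rw [hf] at hle
    have hx : x ∈ low F := hcl ▸ subset_closure rfl
    rw [hcl]
    exact low_down hle hx

lemma t0 : T0Space PGlued := by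
  refine ⟨fun {x y} h => ?_⟩
  have key : ∀ a b : PGlued, Inseparable a b → a ≤ b := by
    intro a b hab
    by_contra hle
    have ha : a ∈ (low {b})ᶜ := by
      rintro ⟨f, hf, hfle⟩
      rw [Finset.mem_singleton] at hf
      exact hle (hf ▸ hfle)
    have hb : b ∈ (low {b})ᶜ := (hab.mem_open_iff (isOpen_compl_low {b})).1 ha
    exact hb ⟨b, Finset.mem_singleton_self b, le_refl b⟩
  exact le_antisymm (key x y h) (key y x h.symm)

lemma irr_aux {T : Set PGlued} (hT : IsPreirreducible T) (hne : T.Nonempty) :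
    ∀ F : Finset PGlued, T ⊆ low F → ∃ f ∈ F, T ⊆ low {f} := by
  intro F
  induction F using Finset.induction_on with
  | empty =>
      intro h
      obtain ⟨x, hx⟩ := hne
      have := h hx
      simp [low] at this
  | @insert a F ha ih =>
      intro hsub
      by_cases hF : T ⊆ low F
      · obtain ⟨f, hf, h⟩ := ih hF
        exact ⟨f, Finset.mem_insert.2 (Or.inr hf), h⟩
      · refine ⟨a, Finset.mem_insert_self _ _, ?_⟩
        by_contra hA
        obtain ⟨u, hu, hunA⟩ := not_subset.1 hA
        obtain ⟨v, hv, hvnF⟩ := not_subset.1 hF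
        obtain ⟨z, hzT, hz1, hz2⟩ := hT _ _ (isOpen_compl_low {a}) (isOpen_compl_low F)
          ⟨u, hu, hunA⟩ ⟨v, hv, hvnF⟩
        have hz := hsub hzT
        rw [Finset.insert_eq, low_union] at hz
        rcases hz with hz | hz
        · exact hz1 hz
        · exact hz2 hz

lemma quasiSober : QuasiSober PGlued := by
  refine ⟨fun {S} hirr hcl => ?_⟩
  obtain ⟨F, hF⟩ := open_char hcl.isOpen_compl
  have hS : S = low F := by rw [← compl_compl S, hF, compl_compl]
  obtain ⟨f, hf, hsub⟩ := irr_aux hirr.2 hirr.1 F (hS.le)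
  refine ⟨f, ?_⟩
  have h1 : low {f} ⊆ S := by
    rw [hS]
    rintro y ⟨g, hg, hle⟩
    rw [Finset.mem_singleton] at hg
    exact ⟨f, hf, hg ▸ hle⟩
  rw [IsGenericPoint, closure_singleton]
  exact Subset.antisymm h1 hsub

instance : Countable NegCol := inferInstanceAs (Countable (ℕ × ℕ))
instance : Countable PGlued := inferInstanceAs (Countable (WithBot (WithTop NegCol)))

lemma countable_opens : {U : Set PGlued | IsOpen U}.Countable := by
  have hsub : {U : Set PGlued | IsOpen U} ⊆ range (fun F : Finset PGlued => (low F)ᶜ) := by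
    intro U hU
    obtain ⟨F, hF⟩ := open_char hU
    exact ⟨F, hF.symm⟩
  exact (countable_range _).mono hsub

lemma col_subset {X : Set PGlued} (hX : IsOpen X) (hne : X.Nonempty) :
    ∃ c, ∀ m, emb c m ∈ X := by
  classical
  obtain ⟨F, rfl⟩ := open_char hX
  obtain ⟨x, hx⟩ := hne
  obtain ⟨c, hc⟩ := Infinite.exists_notMem_finset (F.image colIdx)
  refine ⟨c, fun m => ?_⟩
  rintro ⟨f, hf, hle⟩
  rcases pcases f with rfl | rfl | ⟨c', m', rfl⟩
  · exact not_emb_le_pbot hle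
  · exact hx ⟨ptop, hf, le_ptop x⟩
  · obtain ⟨rfl, -⟩ := emb_le_emb.1 hle
    exact hc (Finset.mem_image.2 ⟨_, hf, colIdx_emb _ _⟩)

lemma not_continuous :
    ¬ ContinuousRel (fun U V : {U : Set PGlued // IsOpen U} => U.1 ⊆ V.1) := by
  classical
  intro hcont
  set r : {U : Set PGlued // IsOpen U} → {U : Set PGlued // IsOpen U} → Prop :=
    fun U V => U.1 ⊆ V.1 with hr
  set U₀ : {U : Set PGlued // IsOpen U} := ⟨(low {pbot})ᶜ, isOpen_compl_low _⟩ with hU₀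
  obtain ⟨hdir, hlub⟩ := hcont U₀
  have htopU₀ : ptop ∈ U₀.1 := by
    rintro ⟨f, hf, hle⟩
    rw [Finset.mem_singleton] at hf
    exact ptop_ne_pbot (le_pbot.1 (hf ▸ hle))
  have hWB : ∀ X : {U : Set PGlued // IsOpen U}, WB r X U₀ → X.1 ⊆ (∅ : Set PGlued) := by
    intro X hX x hx
    exfalso
    obtain ⟨c, hc⟩ := col_subset X.2 ⟨x, hx⟩
    let W : ℕ → {U : Set PGlued // IsOpen U} :=
      fun m => ⟨(low {pbot, emb c m})ᶜ, isOpen_compl_low _⟩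
    have hWmono : ∀ m m', m ≤ m' → (W m).1 ⊆ (W m').1 := by
      intro m m' hmm y hym
      rintro ⟨f, hf, hle⟩
      apply hym
      rcases Finset.mem_insert.1 hf with rfl | hf
      · exact ⟨pbot, Finset.mem_insert_self _ _, hle⟩
      · rw [Finset.mem_singleton] at hf
        subst hf
        exact ⟨emb c m, by simp, hle.trans (emb_le_emb.2 ⟨rfl, hmm⟩)⟩
    have hdirD : DirOn r (range W) := by
      refine ⟨⟨W 0, mem_range_self 0⟩, ?_⟩
      rintro _ ⟨m, rfl⟩ _ ⟨m', rfl⟩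
      exact ⟨W (max m m'), mem_range_self _, hWmono _ _ (le_max_left m m'),
        hWmono _ _ (le_max_right m m')⟩
    have hlubD : IsLubR r (range W) U₀ := by
      constructor
      · rintro _ ⟨m, rfl⟩ y hy
        rintro ⟨f, hf, hle⟩
        apply hy
        rw [Finset.mem_singleton] at hf
        subst hf
        exact ⟨pbot, Finset.mem_insert_self _ _, hle⟩
      · intro u hu y hy
        rcases pcases y with rfl | rfl | ⟨c', m', rfl⟩
        · exact absurd ⟨pbot, Finset.mem_singleton_self _, le_refl _⟩ hy
        · refine hu (W 0) (mem_range_self 0) ?_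
          rintro ⟨f, hf, hle⟩
          rcases Finset.mem_insert.1 hf with rfl | hf
          · exact ptop_ne_pbot (le_pbot.1 hle)
          · rw [Finset.mem_singleton] at hf
            subst hf
            exact not_ptop_le_emb hle
        · refine hu (W (m' + 1)) (mem_range_self _) ?_
          rintro ⟨f, hf, hle⟩
          rcases Finset.mem_insert.1 hf with rfl | hf
          · exact not_emb_le_pbot hle
          · rw [Finset.mem_singleton] at hf
            subst hf
            obtain ⟨-, hmm⟩ := emb_le_emb.1 hle
            exact Nat.not_succ_le_self m' hmm
    obtain ⟨d, ⟨m, rfl⟩, hXd⟩ := hX (range W) hdirD U₀ hlubD (Subset.rfl)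
    exact (hXd (hc m)) ⟨emb c m, by simp, le_refl _⟩
  have hbound : U₀.1 ⊆ (∅ : Set PGlued) :=
    hlub.2 ⟨∅, isOpen_empty⟩ (fun d hd => hWB d hd)
  exact hbound htopU₀

end PAux

open PAux in
/-- `P` with the upper topology is sober with countable open set
lattice, but its open set lattice is not a continuous lattice. -/
theorem stmt11 :
    T0Space PGlued ∧ QuasiSober PGlued ∧
      {U : Set PGlued | IsOpen U}.Countable ∧
      ¬ ContinuousRel (fun U V : {U : Set PGlued // IsOpen U} => U.1 ⊆ V.1) := by
  exact ⟨t0, quasiSober, countable_opens, not_continuous⟩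
end

section
/- There exists a countable frame that is not a continuous lattice. Equivalently, there exists a sober topological space with countably many open sets that is not locally compact. -/
open Set

namespace Stmt12

/-- The underlying set of our space: a point `none` together with a grid `ℕ × ℕ`. -/
abbrev XX : Type := Option (ℕ × ℕ)

/-- A "good" open set: contains the extra point `none`, its trace on every column
is downward closed, and all but finitely many columns are full. -/
def Good (U : Set XX) : Prop :=
  (none : Option (ℕ × ℕ)) ∈ U ∧
    (∀ i j k : ℕ, j ≤ k → (some (i, k) : Option (ℕ × ℕ)) ∈ U →
      (some (i, j) : Option (ℕ × ℕ)) ∈ U) ∧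
    {i : ℕ | ∃ j, (some (i, j) : Option (ℕ × ℕ)) ∉ U}.Finite

instance tXX : TopologicalSpace XX where
  IsOpen U := U = ∅ ∨ Good U
  isOpen_univ := Or.inr ⟨trivial, fun _ _ _ _ _ => trivial, by
    convert Set.finite_empty
    ext i
    simp [Set.mem_empty_iff_false]⟩
  isOpen_inter := by
    rintro U V (rfl | hU) hV
    · exact Or.inl (by simp)
    rcases hV with rfl | hV
    · exact Or.inl (by simp)
    refine Or.inr ⟨⟨hU.1, hV.1⟩, fun i j k hjk hk =>
      ⟨hU.2.1 i j k hjk hk.1, hV.2.1 i j k hjk hk.2⟩, ?_⟩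
    refine (hU.2.2.union hV.2.2).subset ?_
    rintro i ⟨j, hj⟩
    by_cases h : (some (i, j) : Option (ℕ × ℕ)) ∈ U
    · exact Or.inr ⟨j, fun hmem => hj ⟨h, hmem⟩⟩
    · exact Or.inl ⟨j, h⟩
  isOpen_sUnion := by
    intro S hS
    by_cases h : ∃ U ∈ S, U ≠ ∅
    · obtain ⟨U0, hU0S, hU0⟩ := h
      have g0 : Good U0 := ((hS U0 hU0S).resolve_left hU0)
      refine Or.inr ⟨⟨U0, hU0S, g0.1⟩, ?_, ?_⟩
      · rintro i j k hjk ⟨U, hUS, hk⟩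
        have g : Good U := (hS U hUS).resolve_left (by rintro rfl; exact hk)
        exact ⟨U, hUS, g.2.1 i j k hjk hk⟩
      · refine g0.2.2.subset ?_
        rintro i ⟨j, hj⟩
        exact ⟨j, fun hmem => hj ⟨U0, hU0S, hmem⟩⟩
    · push_neg at h
      left
      ext x
      simp only [Set.mem_sUnion, Set.mem_empty_iff_false, iff_false, not_exists]
      rintro U ⟨hUS, hxU⟩
      rw [h U hUS] at hxU
      exact hxU

lemma isOpen_iff {U : Set XX} : IsOpen U ↔ U = ∅ ∨ Good U := Iff.rfl

lemma nonempty_open_good {U : Set XX} (h : IsOpen U) (hne : U.Nonempty) : Good U := by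
  rcases (isOpen_iff.mp h) with rfl | g
  · exact absurd hne (by simp)
  · exact g

/-- Basic open sets: everything, except that column `c` is truncated according to `b`
(`b = none`: column removed entirely; `b = some n`: only rows `≤ n` kept). -/
def B (c : ℕ) (b : Option ℕ) : Set XX :=
  {x : Option (ℕ × ℕ) | ∀ i j : ℕ, x = some (i, j) → i = c → ∃ n, b = some n ∧ j ≤ n}

lemma none_mem_B {c : ℕ} {b : Option ℕ} : (none : Option (ℕ × ℕ)) ∈ B c b := by
  intro i j h
  exact absurd h (by simp)

lemma mem_B {c : ℕ} {b : Option ℕ} {i j : ℕ} :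
    (some (i, j) : Option (ℕ × ℕ)) ∈ B c b ↔ (i = c → ∃ n, b = some n ∧ j ≤ n) := by
  constructor
  · intro h hic
    exact h i j rfl hic
  · intro h i' j' hij hic
    rw [Option.some_inj, Prod.mk.injEq] at hij
    obtain ⟨rfl, rfl⟩ := hij
    exact h hic

lemma isOpen_B (c : ℕ) (b : Option ℕ) : IsOpen (B c b) := by
  refine Or.inr ⟨none_mem_B, ?_, ?_⟩
  · intro i j k hjk hk
    rw [mem_B] at hk ⊢
    intro hic
    obtain ⟨n, hb, hkn⟩ := hk hic
    exact ⟨n, hb, le_trans hjk hkn⟩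
  · refine (Set.finite_singleton c).subset ?_
    rintro i ⟨j, hj⟩
    by_contra hic
    exact hj (mem_B.mpr fun h => absurd h hic)

lemma B_mono {c k l : ℕ} (hkl : k ≤ l) : B c (some k) ⊆ B c (some l) := by
  intro x hx i j hij hic
  obtain ⟨n, hn, hjn⟩ := hx i j hij hic
  rw [Option.some_inj] at hn
  exact ⟨l, rfl, le_trans hjn (hn ▸ hkl)⟩

lemma B_cover (c : ℕ) (x : XX) : ∃ k, x ∈ B c (some k) := by
  rcases x with _ | ⟨i, j⟩
  · exact ⟨0, none_mem_B⟩
  · exact ⟨j, mem_B.mpr fun _ => ⟨j, rfl, le_refl j⟩⟩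

lemma not_subset_B {U : Set XX} {c : ℕ}
    (hfull : ∀ j, (some (c, j) : Option (ℕ × ℕ)) ∈ U) (k : ℕ) : ¬ U ⊆ B c (some k) := by
  intro hsub
  obtain ⟨n, hn, hle⟩ := mem_B.mp (hsub (hfull (k + 1))) rfl
  rw [Option.some_inj] at hn
  omega

lemma exists_full_col {U : Set XX} (g : Good U) :
    ∃ c, ∀ j, (some (c, j) : Option (ℕ × ℕ)) ∈ U := by
  obtain ⟨c, hc⟩ := (g.2.2.infinite_compl).nonempty
  refine ⟨c, fun j => ?_⟩
  by_contra hj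
  exact hc ⟨j, hj⟩

lemma not_compact_of_full {K : Set XX} {c : ℕ}
    (hfull : ∀ j, (some (c, j) : Option (ℕ × ℕ)) ∈ K) : ¬ IsCompact K := by
  intro hK
  obtain ⟨t, ht⟩ := hK.elim_finite_subcover (fun k : ℕ => B c (some k))
    (fun k => isOpen_B c (some k)) (fun x _ => Set.mem_iUnion.mpr (B_cover c x))
  have hmem := ht (hfull (t.sup id + 1))
  rw [Set.mem_iUnion₂] at hmem
  obtain ⟨k, hkt, hk⟩ := hmem
  obtain ⟨n, hn, hle⟩ := mem_B.mp hk rfl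
  rw [Option.some_inj] at hn
  have : k ≤ t.sup id := Finset.le_sup (f := id) hkt
  omega

instance : T0Space XX := by
  rw [t0Space_iff_inseparable]
  intro x y h
  have H : ∀ s : Set XX, IsOpen s → (x ∈ s ↔ y ∈ s) := inseparable_iff_forall_isOpen.mp h
  rcases x with _ | ⟨i, j⟩ <;> rcases y with _ | ⟨i', j'⟩
  · rfl
  · obtain ⟨n, hn, -⟩ := mem_B.mp ((H (B i' none) (isOpen_B _ _)).mp none_mem_B) rfl
    exact absurd hn (by simp)
  · obtain ⟨n, hn, -⟩ := mem_B.mp ((H (B i none) (isOpen_B _ _)).mpr none_mem_B) rfl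
    exact absurd hn (by simp)
  · have hii : i = i' := by
      by_contra hne
      have hx : (some (i, j) : Option (ℕ × ℕ)) ∈ B i' none :=
        mem_B.mpr fun hic => absurd hic hne
      obtain ⟨n, hn, -⟩ := mem_B.mp ((H (B i' none) (isOpen_B _ _)).mp hx) rfl
      exact absurd hn (by simp)
    subst hii
    have h1 : j' ≤ j := by
      have hx : (some (i, j) : Option (ℕ × ℕ)) ∈ B i (some j) :=
        mem_B.mpr fun _ => ⟨j, rfl, le_refl j⟩
      obtain ⟨n, hn, hle⟩ := mem_B.mp ((H (B i (some j)) (isOpen_B _ _)).mp hx) rfl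
      rw [Option.some_inj] at hn
      omega
    have h2 : j ≤ j' := by
      have hy : (some (i, j') : Option (ℕ × ℕ)) ∈ B i (some j') :=
        mem_B.mpr fun _ => ⟨j', rfl, le_refl j'⟩
      obtain ⟨n, hn, hle⟩ := mem_B.mp ((H (B i (some j')) (isOpen_B _ _)).mpr hy) rfl
      rw [Option.some_inj] at hn
      omega
    have : j = j' := le_antisymm h2 h1
    rw [this]

instance : QuasiSober XX := by
  constructor
  intro S hirr hclosed
  classical
  by_cases hnone : (none : Option (ℕ × ℕ)) ∈ S
  · refine ⟨none, subset_antisymm (closure_minimal (by simpa using hnone) hclosed) ?_⟩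
    intro x hx
    rw [mem_closure_iff]
    intro o ho hxo
    exact ⟨none, (nonempty_open_good ho ⟨x, hxo⟩).1, rfl⟩
  · obtain ⟨x0, hx0⟩ := hirr.nonempty
    have gSc : Good Sᶜ :=
      nonempty_open_good hclosed.isOpen_compl ⟨none, hnone⟩
    rcases x0 with _ | ⟨a, j0⟩
    · exact absurd hx0 hnone
    -- Step 1: S is contained in column a
    have hcol : ∀ y ∈ S, ∃ j : ℕ, y = some (a, j) := by
      by_contra hsub
      push_neg at hsub
      obtain ⟨y, hyS, hy⟩ := hsub
      have hyu : y ∈ B a none := by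
        rcases y with _ | ⟨b, k⟩
        · exact absurd hyS hnone
        · refine mem_B.mpr fun hic => absurd ?_ (hy k)
          rw [hic]
      have hvopen : IsOpen (Sᶜ ∪ {x : Option (ℕ × ℕ) | ∃ j : ℕ, x = some (a, j)}) := by
        refine Or.inr ⟨Or.inl gSc.1, ?_, ?_⟩
        · rintro i j k hjk (hk | hk)
          · exact Or.inl (gSc.2.1 i j k hjk hk)
          · obtain ⟨j', hj'⟩ := hk
            rw [Option.some_inj, Prod.mk.injEq] at hj'
            exact Or.inr ⟨j, by rw [hj'.1]⟩
        · refine gSc.2.2.subset ?_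
          rintro i ⟨j, hj⟩
          exact ⟨j, fun hmem => hj (Or.inl hmem)⟩
      obtain ⟨z, hzS, hzu, hzv⟩ := hirr.2 (B a none)
        (Sᶜ ∪ {x : Option (ℕ × ℕ) | ∃ j : ℕ, x = some (a, j)})
        (isOpen_B _ _) hvopen ⟨y, hyS, hyu⟩
        ⟨some (a, j0), hx0, Or.inr ⟨j0, rfl⟩⟩
      rcases hzv with hzv | hzv
      · exact hzv hzS
      · obtain ⟨j, rfl⟩ := hzv
        obtain ⟨n, hn, -⟩ := mem_B.mp hzu rfl
        exact absurd hn (by simp)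
    -- Step 2: S is an upper tail of column a
    set J : Set ℕ := {j | (some (a, j) : Option (ℕ × ℕ)) ∈ S} with hJdef
    have hj0 : j0 ∈ J := hx0
    have hup : ∀ j k : ℕ, j ≤ k → j ∈ J → k ∈ J := by
      intro j k hjk hj
      by_contra hk
      exact (gSc.2.1 a j k hjk hk) hj
    have hmemS : (some (a, sInf J) : Option (ℕ × ℕ)) ∈ S := Nat.sInf_mem ⟨j0, hj0⟩
    refine ⟨some (a, sInf J), subset_antisymm
      (closure_minimal (by simpa using hmemS) hclosed) ?_⟩
    intro y hyS
    obtain ⟨j, rfl⟩ := hcol y hyS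
    rw [mem_closure_iff]
    intro o ho hyo
    have go : Good o := nonempty_open_good ho ⟨_, hyo⟩
    exact ⟨some (a, sInf J), go.2.1 a (sInf J) j (Nat.sInf_le hyS) hyo, rfl⟩

/-- Encoding of open sets by finite data. -/
def enc (s : Finset (ℕ × Option ℕ)) : Set XX :=
  {x : Option (ℕ × ℕ) | ∀ i j : ℕ, x = some (i, j) →
    ∀ q ∈ s, q.1 = i → ∃ n, q.2 = some n ∧ j ≤ n}

lemma countable_opens : {U : Set XX | IsOpen U}.Countable := by
  classical
  have hsub : {U : Set XX | IsOpen U} ⊆ insert ∅ (Set.range enc) := by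
    intro U hU
    rcases (isOpen_iff.mp hU) with rfl | g
    · exact Set.mem_insert _ _
    · refine Set.mem_insert_iff.mpr (Or.inr ?_)
      set T : ℕ → Set ℕ := fun i => {j | (some (i, j) : Option (ℕ × ℕ)) ∈ U} with hT
      have hbdd : ∀ i, i ∈ {i : ℕ | ∃ j, (some (i, j) : Option (ℕ × ℕ)) ∉ U} →
          BddAbove (T i) := by
        rintro i ⟨j', hj'⟩
        refine ⟨j', fun k hk => ?_⟩
        by_contra hlt
        push_neg at hlt
        exact hj' (g.2.1 i j' k (le_of_lt hlt) hk)
      refine ⟨(g.2.2.toFinset).image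
        (fun i => (i, if h : (T i).Nonempty then some (sSup (T i)) else none)), ?_⟩
      ext x
      rcases x with _ | ⟨i, j⟩
      · simp only [enc, Set.mem_setOf_eq]
        constructor
        · intro _; exact g.1
        · intro _ i j h; exact absurd h (by simp)
      · by_cases hi : ∃ j', (some (i, j') : Option (ℕ × ℕ)) ∉ U
        · have hiF : i ∈ g.2.2.toFinset := by
            rw [Set.Finite.mem_toFinset]; exact hi
          constructor
          · intro hx
            have hq : ((i, if h : (T i).Nonempty then some (sSup (T i)) else none) :
                ℕ × Option ℕ) ∈ (g.2.2.toFinset).image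
                (fun i => (i, if h : (T i).Nonempty then some (sSup (T i)) else none)) :=
              Finset.mem_image.mpr ⟨i, hiF, rfl⟩
            obtain ⟨n, hn, hjn⟩ := hx i j rfl _ hq rfl
            by_cases hne : (T i).Nonempty
            · rw [dif_pos hne, Option.some_inj] at hn
              have hsup : sSup (T i) ∈ T i := Nat.sSup_mem hne (hbdd i hi)
              exact g.2.1 i j (sSup (T i)) (hn ▸ hjn) hsup
            · rw [dif_neg hne] at hn
              exact absurd hn (by simp)
          · intro hxU
            intro i' j' hij q hq hq1
            rw [Option.some_inj, Prod.mk.injEq] at hij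
            obtain ⟨rfl, rfl⟩ := hij
            obtain ⟨i'', hi'', rfl⟩ := Finset.mem_image.mp hq
            simp only at hq1
            subst hq1
            have hne : (T i'').Nonempty := ⟨j, hxU⟩
            refine ⟨sSup (T i''), by rw [dif_pos hne], ?_⟩
            exact le_csSup (hbdd i'' (g.2.2.mem_toFinset.mp hi'')) hxU
        · push_neg at hi
          constructor
          · intro _; exact hi j
          · intro _ i' j' hij q hq hq1
            rw [Option.some_inj, Prod.mk.injEq] at hij
            obtain ⟨rfl, rfl⟩ := hij
            obtain ⟨i'', hi'', rfl⟩ := Finset.mem_image.mp hq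
            simp only at hq1
            subst hq1
            obtain ⟨jbad, hjbad⟩ := g.2.2.mem_toFinset.mp hi''
            exact absurd (hi jbad) hjbad
  exact Set.Countable.mono hsub ((Set.countable_range enc).insert ∅)

instance : Countable (TopologicalSpace.Opens XX) := by
  have hc : Countable {U : Set XX | IsOpen U} := countable_opens.to_subtype
  exact Function.Injective.countable
    (f := fun o : TopologicalSpace.Opens XX => (⟨(o : Set XX), o.2⟩ : {U : Set XX | IsOpen U}))
    (fun o1 o2 h => TopologicalSpace.Opens.ext (congrArg Subtype.val h))

/-- The truncation opens, as elements of the frame of opens. -/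
def W (c k : ℕ) : TopologicalSpace.Opens XX := ⟨B c (some k), isOpen_B c (some k)⟩

lemma not_continuousRel :
    ¬ ContinuousRel (fun a b : TopologicalSpace.Opens XX => a ≤ b) := by
  intro h
  obtain ⟨-, hlub⟩ := h ⊤
  -- every element way below ⊤ is ⊥
  have key : ∀ x : TopologicalSpace.Opens XX,
      WB (fun a b => a ≤ b) x ⊤ → x = ⊥ := by
    intro x hx
    by_contra hbot
    have hne : (x : Set XX).Nonempty := by
      rw [Set.nonempty_iff_ne_empty]
      intro he
      exact hbot (by ext y; simp [he, Set.mem_empty_iff_false])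
    obtain ⟨c, hc⟩ := exists_full_col (nonempty_open_good x.2 hne)
    have hdir : DirOn (fun a b : TopologicalSpace.Opens XX => a ≤ b)
        (Set.range (W c)) := by
      refine ⟨⟨W c 0, 0, rfl⟩, ?_⟩
      rintro _ ⟨k, rfl⟩ _ ⟨l, rfl⟩
      exact ⟨W c (max k l), ⟨max k l, rfl⟩,
        B_mono (le_max_left k l), B_mono (le_max_right k l)⟩
    have hlubW : IsLubR (fun a b : TopologicalSpace.Opens XX => a ≤ b)
        (Set.range (W c)) ⊤ := by
      refine ⟨fun d _ => le_top, fun u hu => ?_⟩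
      intro y _
      obtain ⟨k, hk⟩ := B_cover c y
      exact hu (W c k) ⟨k, rfl⟩ hk
    obtain ⟨d, ⟨k, rfl⟩, hxd⟩ := hx (Set.range (W c)) hdir ⊤ hlubW le_rfl
    exact not_subset_B hc k hxd
  have hle : (⊤ : TopologicalSpace.Opens XX) ≤ ⊥ := by
    refine hlub.2 ⊥ ?_
    intro d hd
    rw [key d hd]
  have : (none : Option (ℕ × ℕ)) ∈ (⊥ : TopologicalSpace.Opens XX) :=
    hle (TopologicalSpace.Opens.mem_top _)
  simpa using this

lemma not_locallyCompact : ¬ LocallyCompactSpace XX := by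
  intro h
  obtain ⟨K, hK𝓝, -, hKcpt⟩ :=
    h.local_compact_nhds (none : Option (ℕ × ℕ)) Set.univ Filter.univ_mem
  obtain ⟨V, hVK, hVopen, hnV⟩ := mem_nhds_iff.mp hK𝓝
  obtain ⟨c, hc⟩ := exists_full_col (nonempty_open_good hVopen ⟨none, hnV⟩)
  exact not_compact_of_full (fun j => hVK (hc j)) hKcpt

end Stmt12

/-- There is a countable frame that is not a continuous lattice;
equivalently, there is a sober space with countably many open sets that is not
locally compact. -/
theorem stmt12 :
    (∃ (L : Type) (_ : Order.Frame L), Countable L ∧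
        ¬ ContinuousRel (fun a b : L => a ≤ b)) ∧
      ∃ (X : Type) (_ : TopologicalSpace X), T0Space X ∧ QuasiSober X ∧
        {U : Set X | IsOpen U}.Countable ∧ ¬ LocallyCompactSpace X := by
  constructor
  · exact ⟨TopologicalSpace.Opens Stmt12.XX, inferInstance, inferInstance,
      Stmt12.not_continuousRel⟩
  · exact ⟨Stmt12.XX, Stmt12.tXX, inferInstance, inferInstance,
      Stmt12.countable_opens, Stmt12.not_locallyCompact⟩
end

section
/- Let Q be the poset obtained from the lattice P of Example (countably many copies of negative integers glued at top -1 and bottom -∞) by removing the bottom element -∞. Then Q, equipped with the upper topology, is a sober space in which every compact saturated subset has empty interior; in particular Q is not locally compact. -/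
/-!
The topology on `Q` is the upper topology of its order. A closed irreducible set is a lower set;
if it contains `⊤` it is all of `Q = ↓⊤`, and otherwise irreducibility puts it below a single
element of one column, where it has a largest element, which is then a generic point.
A nonempty open set contains the complement of `↓F` for some finite `F` not containing `⊤`, hence a
whole column that `F` does not meet. A column is a descending chain without lower bound, so the
increasing open cover of `Q` by the complements of its principal ideals shows that no compact set
contains a column.
-/

open Set

/-- The poset `Q`: `P` with the bottom element `-∞` removed. -/
def QGlued : Type := WithTop NegCol

instance : PartialOrder QGlued := by unfold QGlued; infer_instance

/-- The upper topology on `QGlued`. -/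
instance : TopologicalSpace QGlued :=
  TopologicalSpace.generateFrom
    {s : Set QGlued | ∃ F : Finset QGlued, s = {x | ∃ f ∈ F, x ≤ f}ᶜ}

namespace Topology

theorem upper_eq_generateFrom_compl_lowerClosure_finset (α : Type*) [Preorder α] :
    upper α = TopologicalSpace.generateFrom
      {s : Set α | ∃ F : Finset α, s = {x | ∃ f ∈ F, x ≤ f}ᶜ} := by
  refine le_antisymm (le_generateFrom ?_) (le_generateFrom ?_)
  · rintro _ ⟨F, rfl⟩
    have hF : {x | ∃ f ∈ F, x ≤ f}ᶜ = ⋂ f ∈ F, (Iic f)ᶜ := by ext; simp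
    rw [hF]
    exact @isOpen_biInter_finset _ _ (upper α) _ _
      fun f _ => TopologicalSpace.GenerateOpen.basic _ ⟨f, rfl⟩
  · rintro _ ⟨a, rfl⟩
    exact TopologicalSpace.GenerateOpen.basic _ ⟨{a}, by ext; simp⟩

namespace IsUpper

variable {α : Type*} [Preorder α] [TopologicalSpace α] [IsUpper α]

theorem isGenericPoint_of_isGreatest {S : Set α} {a : α} (hS : IsClosed S) (ha : IsGreatest S a) :
    IsGenericPoint a S := by
  rw [isGenericPoint_def, closure_singleton]
  exact Subset.antisymm (fun _ hb => isLowerSet_of_isClosed hS hb ha.1) ha.2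

theorem exists_subset_Iic_of_isIrreducible {S : Set α} {x : α} (hirr : IsIrreducible S)
    (hS : IsClosed S) (hx : x ∉ S) : ∃ b, S ⊆ Iic b ∧ ¬ x ≤ b := by
  obtain ⟨_, ⟨t, ht, rfl⟩, hxt, htS⟩ :=
    IsUpper.isTopologicalBasis.exists_subset_of_mem_open hx hS.isOpen_compl
  have hSt : S ⊆ ⋃₀ ↑(ht.toFinset.image Iic) := fun y hy => by
    obtain ⟨b, hb, hyb⟩ := compl_subset_compl.1 htS hy
    exact ⟨Iic b, by simpa using ⟨b, hb, rfl⟩, hyb⟩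
  obtain ⟨_, hb, hSb⟩ := isIrreducible_iff_sUnion_isClosed.1 hirr _
    (by simpa using fun b _ => isClosed_Iic) hSt
  obtain ⟨b, hbt, rfl⟩ := by simpa using hb
  exact ⟨b, hSb, fun hxb => hxt ⟨b, hbt, hxb⟩⟩

end IsUpper

end Topology

theorem IsCompact.exists_notMem_of_not_bddBelow {α : Type*} [Preorder α] [TopologicalSpace α]
    [ClosedIicTopology α] {K : Set α} (hK : IsCompact K) {ι : Type*} [Nonempty ι]
    {d : ι → α} (hd : Directed (· ≥ ·) d) (hbdd : ¬ BddBelow (range d)) : ∃ i, d i ∉ K := by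
  have hcover : K ⊆ ⋃ i, (Iic (d i))ᶜ := fun x _ => by
    obtain ⟨_, ⟨i, rfl⟩, hxi⟩ := not_bddBelow_iff'.1 hbdd x
    exact mem_iUnion.2 ⟨i, hxi⟩
  obtain ⟨i, hi⟩ := hK.elim_directed_cover _ (fun i => isClosed_Iic.isOpen_compl) hcover
    (hd.mono_comp _ (g := fun a => (Iic a)ᶜ) fun _ _ h => compl_subset_compl.2 (Iic_subset_Iic.2 h))
  exact ⟨i, fun hdi => hi hdi le_rfl⟩

open Topology

instance : OrderTop QGlued := by unfold QGlued; infer_instance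

instance : IsUpper QGlued := ⟨(upper_eq_generateFrom_compl_lowerClosure_finset QGlued).symm⟩

namespace QGlued

def mk (i m : ℕ) : QGlued := WithTop.some (α := NegCol) (i, m)

@[elab_as_elim]
theorem induction {motive : QGlued → Prop} (top : motive ⊤) (mk : ∀ i m, motive (mk i m))
    (x : QGlued) : motive x :=
  WithTop.recTopCoe (C := motive) top (fun p => mk p.1 p.2) x

theorem mk_le_mk {i j m n : ℕ} : mk i m ≤ mk j n ↔ i = j ∧ n ≤ m := WithTop.coe_le_coe

theorem top_not_le_mk (i m : ℕ) : ¬ (⊤ : QGlued) ≤ mk i m := WithTop.not_top_le_coe _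

theorem antitone_mk (i : ℕ) : Antitone (mk i) := fun _ _ h => mk_le_mk.2 ⟨rfl, h⟩

theorem not_bddBelow_range_mk (i : ℕ) : ¬ BddBelow (range (mk i)) := by
  refine not_bddBelow_iff'.2 fun x => ?_
  induction x using QGlued.induction with
  | top => exact ⟨mk i 0, mem_range_self 0, top_not_le_mk i 0⟩
  | mk j m => exact ⟨mk i (m + 1), mem_range_self _, fun h => m.not_succ_le_self (mk_le_mk.1 h).2⟩

theorem exists_isGreatest_of_subset_Iic_mk {S : Set QGlued} (hS : S.Nonempty) {i n : ℕ}
    (hSi : S ⊆ Iic (mk i n)) : ∃ a, IsGreatest S a := by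
  classical
  have hcol : ∀ y ∈ S, ∃ m, y = mk i m := fun y hy => by
    induction y using QGlued.induction with
    | top => exact absurd (hSi hy) (top_not_le_mk i n)
    | mk j m => exact ⟨m, by rw [(mk_le_mk.1 (hSi hy)).1]⟩
  have hex : ∃ m, mk i m ∈ S := by
    obtain ⟨y, hy⟩ := hS
    obtain ⟨m, rfl⟩ := hcol y hy
    exact ⟨m, hy⟩
  refine ⟨mk i (Nat.find hex), Nat.find_spec hex, fun y hy => ?_⟩
  obtain ⟨m, rfl⟩ := hcol y hy
  exact antitone_mk i (Nat.find_min' hex hy)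

instance : QuasiSober QGlued := by
  refine ⟨fun {S} hirr hS => ?_⟩
  obtain ⟨a, ha⟩ : ∃ a, IsGreatest S a := by
    by_cases htop : ⊤ ∈ S
    · exact ⟨⊤, htop, fun _ _ => le_top⟩
    · obtain ⟨b, hSb, hb⟩ := IsUpper.exists_subset_Iic_of_isIrreducible hirr hS htop
      induction b using QGlued.induction with
      | top => exact absurd le_rfl hb
      | mk i n => exact exists_isGreatest_of_subset_Iic_mk hirr.nonempty hSb
  exact ⟨a, IsUpper.isGenericPoint_of_isGreatest hS ha⟩

/-- The column of an element; `col ⊤ = 0` is a junk value. -/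
def col (x : QGlued) : ℕ := (WithTop.untopD (0, 0) x : NegCol).1

theorem exists_forall_mk_mem_of_isOpen {U : Set QGlued} (hU : IsOpen U) (hne : U.Nonempty) :
    ∃ i, ∀ m, mk i m ∈ U := by
  obtain ⟨x, hx⟩ := hne
  obtain ⟨_, ⟨t, ht, rfl⟩, hxt, htU⟩ :=
    IsUpper.isTopologicalBasis.exists_subset_of_mem_open hx hU
  obtain ⟨i, hi⟩ := (ht.image col).exists_notMem
  refine ⟨i, fun m => htU fun ⟨b, hbt, hle⟩ => ?_⟩
  induction b using QGlued.induction with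
  | top => exact hxt ⟨⊤, hbt, le_top⟩
  | mk j n => exact hi ⟨mk j n, hbt, (mk_le_mk.1 hle).1.symm⟩

theorem interior_eq_empty_of_isCompact {K : Set QGlued} (hK : IsCompact K) : interior K = ∅ := by
  by_contra hne
  obtain ⟨i, hi⟩ := exists_forall_mk_mem_of_isOpen isOpen_interior (nonempty_iff_ne_empty.2 hne)
  obtain ⟨m, hm⟩ :=
    hK.exists_notMem_of_not_bddBelow (antitone_mk i).directed_ge (not_bddBelow_range_mk i)
  exact hm (interior_subset (hi m))

theorem not_locallyCompactSpace : ¬ LocallyCompactSpace QGlued := fun _ => by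
  obtain ⟨K, hK, hKtop⟩ := exists_compact_mem_nhds (⊤ : QGlued)
  simpa [interior_eq_empty_of_isCompact hK] using mem_interior_iff_mem_nhds.2 hKtop

end QGlued

/-- `Q` with the upper topology is sober, every compact saturated
subset of `Q` has empty interior, and `Q` is not locally compact. -/
theorem stmt13 :
    T0Space QGlued ∧ QuasiSober QGlued ∧
      (∀ K : Set QGlued, IsCompact K → K = ⋂₀ {U | IsOpen U ∧ K ⊆ U} →
        interior K = ∅) ∧
      ¬ LocallyCompactSpace QGlued :=
  ⟨inferInstance, inferInstance, fun _ hK _ => QGlued.interior_eq_empty_of_isCompact hK,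
    QGlued.not_locallyCompactSpace⟩
end

section
/- Let L be a countable frame. Then L is quasicontinuous (as a dcpo) if and only if L is a continuous lattice, if and only if L is an algebraic lattice. -/
open Set

/-! ### Auxiliary definitions and lemmas for stmt17 -/

/-- Binary tree of pairs: child `false` shrinks the second component via `B`,
child `true` grows the first component via `A`. -/
def tnode {X : Type*} (A B : X × X → X) (p0 : X × X) : List Bool → X × X
  | [] => p0
  | (false :: l) => ((tnode A B p0 l).1, B (tnode A B p0 l))
  | (true :: l) => (A (tnode A B p0 l), (tnode A B p0 l).2)

/-- Reversed prefix list of a boolean sequence. -/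
def prefList (f : ℕ → Bool) : ℕ → List Bool
  | 0 => []
  | (n + 1) => f n :: prefList f n

section AuxCL
variable {L : Type*} [CompleteLattice L]

lemma dirOn_singleton (x : L) : DirOn ((· ≤ ·) : L → L → Prop) {x} :=
  ⟨⟨x, rfl⟩, fun a ha b hb => ⟨x, rfl, le_of_eq ha, le_of_eq hb⟩⟩

lemma isLubR_singleton (x : L) : IsLubR ((· ≤ ·) : L → L → Prop) {x} x :=
  ⟨fun d hd => le_of_eq hd, fun u hu => hu x rfl⟩

lemma isLubR_sSup {D : Set L} : IsLubR ((· ≤ ·) : L → L → Prop) D (sSup D) :=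
  ⟨fun _ hd => le_sSup hd, fun _ hu => sSup_le hu⟩

lemma IsLubR.le_eq {D : Set L} {s : L} (h : IsLubR ((· ≤ ·) : L → L → Prop) D s) :
    s = sSup D :=
  le_antisymm (h.2 _ fun _ hd => le_sSup hd) (sSup_le h.1)

lemma wb_le {a b : L} (h : WB ((· ≤ ·) : L → L → Prop) a b) : a ≤ b := by
  obtain ⟨d, hd, hle⟩ := h {b} (dirOn_singleton b) b (isLubR_singleton b) le_rfl
  rw [Set.mem_singleton_iff] at hd
  exact hd ▸ hle

lemma bot_wb (b : L) : WB ((· ≤ ·) : L → L → Prop) ⊥ b :=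
  fun _ hD _ _ _ => ⟨hD.1.choose, hD.1.choose_spec, bot_le⟩

lemma wb_mono_left {a a' b : L} (h : a ≤ a') (hw : WB ((· ≤ ·) : L → L → Prop) a' b) :
    WB ((· ≤ ·) : L → L → Prop) a b := fun D hD s hs hb =>
  let ⟨d, hd, h'⟩ := hw D hD s hs hb; ⟨d, hd, h.trans h'⟩

lemma wb_mono_right {a b b' : L} (hw : WB ((· ≤ ·) : L → L → Prop) a b) (h : b ≤ b') :
    WB ((· ≤ ·) : L → L → Prop) a b' := fun D hD s hs hb' => hw D hD s hs (h.trans hb')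

lemma wb_sup {a b y : L} (ha : WB ((· ≤ ·) : L → L → Prop) a y)
    (hb : WB ((· ≤ ·) : L → L → Prop) b y) : WB ((· ≤ ·) : L → L → Prop) (a ⊔ b) y := by
  intro D hD s hs hy
  obtain ⟨d1, hd1, h1⟩ := ha D hD s hs hy
  obtain ⟨d2, hd2, h2⟩ := hb D hD s hs hy
  obtain ⟨c, hc, hc1, hc2⟩ := hD.2 d1 hd1 d2 hd2
  exact ⟨c, hc, sup_le (h1.trans hc1) (h2.trans hc2)⟩

lemma compact_sup {a b : L} (ha : WB ((· ≤ ·) : L → L → Prop) a a)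
    (hb : WB ((· ≤ ·) : L → L → Prop) b b) :
    WB ((· ≤ ·) : L → L → Prop) (a ⊔ b) (a ⊔ b) := by
  intro D hD s hs hle
  obtain ⟨d1, hd1, h1⟩ := ha D hD s hs (le_sup_left.trans hle)
  obtain ⟨d2, hd2, h2⟩ := hb D hD s hs (le_sup_right.trans hle)
  obtain ⟨c, hc, hc1, hc2⟩ := hD.2 d1 hd1 d2 hd2
  exact ⟨c, hc, sup_le (h1.trans hc1) (h2.trans hc2)⟩

lemma compact_wb {a y : L} (ha : WB ((· ≤ ·) : L → L → Prop) a a) (hay : a ≤ y) :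
    WB ((· ≤ ·) : L → L → Prop) a y :=
  fun D hD s hs hys => ha D hD s hs (hay.trans hys)

lemma dirOn_wbSet (y : L) :
    DirOn ((· ≤ ·) : L → L → Prop) {a | WB ((· ≤ ·) : L → L → Prop) a y} :=
  ⟨⟨⊥, bot_wb y⟩, fun a ha b hb => ⟨a ⊔ b, wb_sup ha hb, le_sup_left, le_sup_right⟩⟩

/-- Interpolation in a continuous complete lattice. -/
lemma wb_interp (hC : ContinuousRel ((· ≤ ·) : L → L → Prop)) {u x : L}
    (h : WB ((· ≤ ·) : L → L → Prop) u x) :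
    ∃ v, WB ((· ≤ ·) : L → L → Prop) u v ∧ WB ((· ≤ ·) : L → L → Prop) v x := by
  set D : Set L := {b | ∃ c, WB ((· ≤ ·) : L → L → Prop) b c ∧ WB ((· ≤ ·) : L → L → Prop) c x}
    with hDdef
  have hdir : DirOn ((· ≤ ·) : L → L → Prop) D := by
    refine ⟨⟨⊥, ⊥, bot_wb ⊥, bot_wb x⟩, ?_⟩
    rintro b1 ⟨c1, hb1, hc1⟩ b2 ⟨c2, hb2, hc2⟩
    exact ⟨b1 ⊔ b2, ⟨c1 ⊔ c2,
      wb_sup (wb_mono_right hb1 le_sup_left) (wb_mono_right hb2 le_sup_right),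
      wb_sup hc1 hc2⟩, le_sup_left, le_sup_right⟩
  have hxs : x ≤ sSup D := by
    refine (hC x).2.2 (sSup D) ?_
    intro c hc
    refine (hC c).2.2 (sSup D) ?_
    intro b hb
    exact le_sSup ⟨c, hb, hc⟩
  obtain ⟨b, ⟨c, hbc, hcx⟩, hub⟩ := h D hdir (sSup D) isLubR_sSup hxs
  exact ⟨c, wb_mono_left hub hbc, hcx⟩

/-- Splitting lemma: if `u ≪ x` and there is no compact element between `u` and `x`,
then one can split the pair into two pairs witnessing an order-incomparability. -/
lemma split_pair (hC : ContinuousRel ((· ≤ ·) : L → L → Prop)) {u x : L}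
    (hux : WB ((· ≤ ·) : L → L → Prop) u x)
    (hnc : ∀ k, u ≤ k → k ≤ x → ¬ WB ((· ≤ ·) : L → L → Prop) k k) :
    ∃ a b, WB ((· ≤ ·) : L → L → Prop) u b ∧ b ≤ x ∧ u ≤ a ∧
      WB ((· ≤ ·) : L → L → Prop) a x ∧ ¬ a ≤ b := by
  by_cases hcase : ∃ v, WB ((· ≤ ·) : L → L → Prop) u v ∧ v ≤ x ∧ v ≠ x
  · obtain ⟨v, huv, hvx, hne⟩ := hcase
    by_cases hall : ∀ a, u ≤ a → WB ((· ≤ ·) : L → L → Prop) a x → a ≤ v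
    · exfalso
      apply hne
      refine le_antisymm hvx ?_
      refine (hC x).2.2 v ?_
      intro c hc
      exact le_sup_right.trans (hall (u ⊔ c) le_sup_left (wb_sup hux hc))
    · push_neg at hall
      obtain ⟨a, hua, hax, hav⟩ := hall
      exact ⟨a, v, huv, hvx, hua, hax, hav⟩
  · push_neg at hcase
    obtain ⟨v, huv, hvx⟩ := wb_interp hC hux
    have hv := hcase v huv (wb_le hvx)
    exact absurd (hv ▸ hvx) (hnc x (wb_le hux) le_rfl)

/-- The binary-tree argument: from a splitting scheme one gets an injection of
`ℕ → Bool` into `L`, contradicting countability. -/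
lemma tree_absurd [Countable L] {u y : L} (Good : L × L → Prop) (A B : L × L → L)
    (hG0 : Good (u, y))
    (h12 : ∀ p, Good p → p.1 ≤ p.2)
    (hAB : ∀ p, Good p →
      Good (p.1, B p) ∧ Good (A p, p.2) ∧ ¬ A p ≤ B p ∧ p.1 ≤ A p ∧ B p ≤ p.2) :
    False := by
  classical
  have hgood : ∀ (f : ℕ → Bool) (n : ℕ), Good (tnode A B (u, y) (prefList f n)) := by
    intro f n
    induction n with
    | zero => exact hG0
    | succ n ih =>
      have h := hAB _ ih
      show Good (tnode A B (u, y) (f n :: prefList f n))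
      cases hfn : f n
      · exact h.1
      · exact h.2.1
  have hstep1 : ∀ (f : ℕ → Bool) (n : ℕ),
      (tnode A B (u, y) (prefList f n)).1 ≤ (tnode A B (u, y) (prefList f (n + 1))).1 := by
    intro f n
    have h := hAB _ (hgood f n)
    show (tnode A B (u, y) (prefList f n)).1 ≤ (tnode A B (u, y) (f n :: prefList f n)).1
    cases hfn : f n
    · exact le_rfl
    · exact h.2.2.2.1
  have hstep2 : ∀ (f : ℕ → Bool) (n : ℕ),
      (tnode A B (u, y) (prefList f (n + 1))).2 ≤ (tnode A B (u, y) (prefList f n)).2 := by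
    intro f n
    have h := hAB _ (hgood f n)
    show (tnode A B (u, y) (f n :: prefList f n)).2 ≤ (tnode A B (u, y) (prefList f n)).2
    cases hfn : f n
    · exact h.2.2.2.2
    · exact le_rfl
  have hmono1 : ∀ (f : ℕ → Bool) (m n : ℕ), m ≤ n →
      (tnode A B (u, y) (prefList f m)).1 ≤ (tnode A B (u, y) (prefList f n)).1 := by
    intro f m n h
    induction n, h using Nat.le_induction with
    | base => exact le_rfl
    | succ n hmn ih => exact ih.trans (hstep1 f n)
  have hmono2 : ∀ (f : ℕ → Bool) (m n : ℕ), m ≤ n →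
      (tnode A B (u, y) (prefList f n)).2 ≤ (tnode A B (u, y) (prefList f m)).2 := by
    intro f m n h
    induction n, h using Nat.le_induction with
    | base => exact le_rfl
    | succ n hmn ih => exact (hstep2 f n).trans ih
  have hprefeq : ∀ (f g : ℕ → Bool) (n : ℕ), (∀ m, m < n → f m = g m) →
      prefList f n = prefList g n := by
    intro f g n h
    induction n with
    | zero => rfl
    | succ n ih =>
      show f n :: prefList f n = g n :: prefList g n
      rw [h n (Nat.lt_succ_self n), ih (fun m hm => h m (hm.trans (Nat.lt_succ_self n)))]
  have hkey : ∀ (f g : ℕ → Bool) (n : ℕ), (∀ m, m < n → f m = g m) →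
      f n = false → g n = true →
      (⨆ k, (tnode A B (u, y) (prefList f k)).1) ≠
        (⨆ k, (tnode A B (u, y) (prefList g k)).1) := by
    intro f g n hm hf hg heq
    have hpg : prefList g n = prefList f n := hprefeq g f n (fun m hm' => (hm m hm').symm)
    have hABp := hAB _ (hgood f n)
    have hnf : tnode A B (u, y) (prefList f (n + 1)) =
        ((tnode A B (u, y) (prefList f n)).1, B (tnode A B (u, y) (prefList f n))) := by
      show tnode A B (u, y) (f n :: prefList f n) = _
      rw [hf]
      rfl
    have hng : tnode A B (u, y) (prefList g (n + 1)) =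
        (A (tnode A B (u, y) (prefList f n)), (tnode A B (u, y) (prefList f n)).2) := by
      show tnode A B (u, y) (g n :: prefList g n) = _
      rw [hg, hpg]
      rfl
    have hyfle : (⨆ k, (tnode A B (u, y) (prefList f k)).1) ≤
        B (tnode A B (u, y) (prefList f n)) := by
      refine iSup_le fun k => ?_
      rcases le_total k (n + 1) with hk | hk
      · refine (hmono1 f k (n + 1) hk).trans ?_
        rw [hnf]
        exact h12 _ hABp.1
      · have h1 : (tnode A B (u, y) (prefList f k)).1 ≤
            (tnode A B (u, y) (prefList f k)).2 := h12 _ (hgood f k)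
        have h2 := hmono2 f (n + 1) k hk
        rw [hnf] at h2
        exact h1.trans h2
    have hyg : A (tnode A B (u, y) (prefList f n)) ≤
        ⨆ k, (tnode A B (u, y) (prefList g k)).1 := by
      have := le_iSup (fun k => (tnode A B (u, y) (prefList g k)).1) (n + 1)
      rw [hng] at this
      exact this
    exact hABp.2.2.1 (hyg.trans (le_of_eq heq.symm) |>.trans hyfle)
  have hinj : Function.Injective
      (fun f : ℕ → Bool => ⨆ n, (tnode A B (u, y) (prefList f n)).1) := by
    intro f g heq
    have heq' : (⨆ n, (tnode A B (u, y) (prefList f n)).1) =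
        (⨆ n, (tnode A B (u, y) (prefList g n)).1) := heq
    funext n
    induction n using Nat.strong_induction_on with
    | _ n ih =>
      by_contra hne
      have hagree : ∀ m, m < n → f m = g m := fun m hm => ih m hm
      rcases Bool.eq_false_or_eq_true (f n) with hf | hf <;>
        rcases Bool.eq_false_or_eq_true (g n) with hg | hg
      · exact hne (hf.trans hg.symm)
      · exact hkey g f n (fun m hm' => (hagree m hm').symm) hg hf heq'.symm
      · exact hkey f g n hagree hf hg heq'
      · exact hne (hf.trans hg.symm)
  have hcnt : Countable (ℕ → Bool) := hinj.countable
  obtain ⟨e, he⟩ := exists_surjective_nat (ℕ → Bool)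
  obtain ⟨n, hn⟩ := he (fun n => !(e n n))
  have := congrFun hn n
  simp at this

/-- In a countable continuous complete lattice, there is no "gap": if `u ≪ y` then
there is a compact element between `u` and `y`. -/
lemma no_gap [Countable L] (hC : ContinuousRel ((· ≤ ·) : L → L → Prop)) {u y : L}
    (huy : WB ((· ≤ ·) : L → L → Prop) u y)
    (hnc : ∀ k, u ≤ k → k ≤ y → ¬ WB ((· ≤ ·) : L → L → Prop) k k) : False := by
  classical
  have hsplit : ∀ p : L × L, ∃ a b : L,
      (WB ((· ≤ ·) : L → L → Prop) p.1 p.2 ∧ u ≤ p.1 ∧ p.2 ≤ y) →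
      ((WB ((· ≤ ·) : L → L → Prop) p.1 b ∧ u ≤ p.1 ∧ b ≤ y) ∧
        (WB ((· ≤ ·) : L → L → Prop) a p.2 ∧ u ≤ a ∧ p.2 ≤ y) ∧
        ¬ a ≤ b ∧ p.1 ≤ a ∧ b ≤ p.2) := by
    intro p
    by_cases hp : WB ((· ≤ ·) : L → L → Prop) p.1 p.2 ∧ u ≤ p.1 ∧ p.2 ≤ y
    · obtain ⟨a, b, h1, h2, h3, h4, h5⟩ := split_pair hC hp.1
        (fun k hk1 hk2 => hnc k (hp.2.1.trans hk1) (hk2.trans hp.2.2))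
      exact ⟨a, b, fun _ => ⟨⟨h1, hp.2.1, h2.trans hp.2.2⟩,
        ⟨h4, hp.2.1.trans h3, hp.2.2⟩, h5, h3, h2⟩⟩
    · exact ⟨⊥, ⊥, fun hg => absurd hg hp⟩
  choose A B hAB using hsplit
  exact tree_absurd
    (fun p : L × L => WB ((· ≤ ·) : L → L → Prop) p.1 p.2 ∧ u ≤ p.1 ∧ p.2 ≤ y) A B
    ⟨huy, le_rfl, le_rfl⟩ (fun p hp => wb_le hp.1) hAB

end AuxCL

section AuxFrame
variable {L : Type*} [Order.Frame L]

/-- Frame distributivity over meets of selections from finitely many sets. -/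
lemma inf_le_sSup_sel (D : L → Set L) (S : L → L) :
    ∀ F : Finset L, (∀ f ∈ F, S f ≤ sSup (D f)) →
      F.inf S ≤ sSup ((fun g : L → L => F.inf g) '' {g | ∀ f ∈ F, g f ∈ D f}) := by
  classical
  intro F
  induction F using Finset.induction_on with
  | empty =>
    intro _
    simp only [Finset.inf_empty]
    exact le_sSup ⟨fun _ => ⊥, by simp, by simp⟩
  | @insert a F' ha ih =>
    intro hS
    rw [Finset.inf_insert]
    have h1 : S a ≤ sSup (D a) := hS a (Finset.mem_insert_self a F')
    have h2 := ih (fun f hf => hS f (Finset.mem_insert_of_mem hf))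
    refine le_trans (inf_le_inf h1 h2) ?_
    rw [sSup_inf_sSup]
    refine iSup_le fun p => iSup_le fun hp => ?_
    obtain ⟨d, e⟩ := p
    obtain ⟨hd, g, hg, rfl⟩ : d ∈ D a ∧ ∃ g, (∀ f ∈ F', g f ∈ D f) ∧ F'.inf g = e := by
      obtain ⟨hd, he⟩ := hp
      obtain ⟨g, hg, hge⟩ := he
      exact ⟨hd, g, hg, hge⟩
    refine le_sSup ⟨Function.update g a d, ?_, ?_⟩
    · intro f hf
      rcases Finset.mem_insert.mp hf with rfl | hf'
      · simpa using hd
      · rw [Function.update_of_ne (ne_of_mem_of_not_mem hf' ha)]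
        exact hg f hf'
    · show (insert a F').inf (Function.update g a d) = (d, F'.inf g).1 ⊓ (d, F'.inf g).2
      rw [Finset.inf_insert, Function.update_self]
      show d ⊓ F'.inf (Function.update g a d) = d ⊓ F'.inf g
      have : F'.inf (Function.update g a d) = F'.inf g :=
        Finset.inf_congr rfl fun f hf => by
          rw [Function.update_of_ne (ne_of_mem_of_not_mem hf ha)]
      rw [this]
  
/-- Key lemma: in a frame, if a finite set is way below `{x}` then one of its
elements is way below `x`. -/
lemma exists_wb_of_setWB {F : Finset L} {x : L}
    (h : SetWB ((· ≤ ·) : L → L → Prop) (F : Set L) {x}) :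
    ∃ f ∈ F, WB ((· ≤ ·) : L → L → Prop) f x := by
  classical
  by_contra hcon
  push_neg at hcon
  have hch : ∀ f : L, ∃ (D : Set L) (s : L), DirOn ((· ≤ ·) : L → L → Prop) D ∧
      IsLubR ((· ≤ ·) : L → L → Prop) D s ∧ (f ∈ F → x ≤ s ∧ ∀ d ∈ D, ¬ f ≤ d) := by
    intro f
    by_cases hf : f ∈ F
    · have h1 := hcon f hf
      unfold WB at h1
      push_neg at h1
      obtain ⟨D, hD, s, hs, hxs, hnd⟩ := h1
      exact ⟨D, s, hD, hs, fun _ => ⟨hxs, hnd⟩⟩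
    · exact ⟨{x}, x, dirOn_singleton x, isLubR_singleton x, fun hf' => absurd hf' hf⟩
  choose D S hdir hlub hcond using hch
  set T : Set L := (fun g : L → L => F.inf g) '' {g | ∀ f ∈ F, g f ∈ D f} with hT
  have hTdir : DirOn ((· ≤ ·) : L → L → Prop) T := by
    constructor
    · exact ⟨F.inf (fun f => (hdir f).1.choose), ⟨_, fun f _ => (hdir f).1.choose_spec, rfl⟩⟩
    · rintro a ⟨g1, hg1, rfl⟩ b ⟨g2, hg2, rfl⟩
      have hsel : ∀ f : L, ∃ c, f ∈ F → c ∈ D f ∧ g1 f ≤ c ∧ g2 f ≤ c := by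
        intro f
        by_cases hf : f ∈ F
        · obtain ⟨c, hc, h1, h2⟩ := (hdir f).2 (g1 f) (hg1 f hf) (g2 f) (hg2 f hf)
          exact ⟨c, fun _ => ⟨hc, h1, h2⟩⟩
        · exact ⟨⊥, fun hf' => absurd hf' hf⟩
      choose g3 hg3 using hsel
      refine ⟨F.inf g3, ⟨g3, fun f hf => (hg3 f hf).1, rfl⟩, ?_, ?_⟩
      · exact Finset.inf_mono_fun fun f hf => (hg3 f hf).2.1
      · exact Finset.inf_mono_fun fun f hf => (hg3 f hf).2.2
  have hxT : x ≤ sSup T := by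
    have h1 : x ≤ F.inf S := Finset.le_inf fun f hf => (hcond f hf).1
    exact h1.trans (inf_le_sSup_sel D S F (fun f hf => le_of_eq (hlub f).le_eq))
  obtain ⟨d, hdT, hdUp⟩ := h T hTdir (sSup T) isLubR_sSup ⟨x, rfl, hxT⟩
  obtain ⟨g, hg, rfl⟩ := hdT
  obtain ⟨f, hfF, hfle⟩ := hdUp
  have hfF' : f ∈ F := Finset.mem_coe.mp hfF
  exact (hcond f hfF').2 (g f) (hg f hfF') (hfle.trans (Finset.inf_le hfF'))

end AuxFrame

/-- For a countable frame `L`: `L` is quasicontinuous iff `L` is a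
continuous lattice, iff `L` is an algebraic lattice. -/
theorem stmt17 {L : Type*} [Order.Frame L] [Countable L] :
    (QuasicontinuousRel ((· ≤ ·) : L → L → Prop) ↔
        ContinuousRel ((· ≤ ·) : L → L → Prop)) ∧
      (ContinuousRel ((· ≤ ·) : L → L → Prop) ↔
        AlgebraicRel ((· ≤ ·) : L → L → Prop)) := by
  have hQC : QuasicontinuousRel ((· ≤ ·) : L → L → Prop) →
      ContinuousRel ((· ≤ ·) : L → L → Prop) := by
    intro hQ y
    refine ⟨dirOn_wbSet y, ⟨fun a ha => wb_le ha, ?_⟩⟩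
    intro v hv
    have hmem : v ∈ UpS ((· ≤ ·) : L → L → Prop) {y} := by
      rw [(hQ y).2]
      refine Set.mem_iInter₂.mpr fun F hF => ?_
      obtain ⟨f, hfF, hf⟩ := exists_wb_of_setWB hF
      exact ⟨f, Finset.mem_coe.mpr hfF, hv f hf⟩
    obtain ⟨f, hf, hfv⟩ := hmem
    exact Set.mem_singleton_iff.mp hf ▸ hfv
  have hCQ : ContinuousRel ((· ≤ ·) : L → L → Prop) →
      QuasicontinuousRel ((· ≤ ·) : L → L → Prop) := by
    intro hC x
    have hlub := (hC x).2
    constructor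
    · constructor
      · refine ⟨({⊥} : Finset L), ?_⟩
        intro Dset hD s hs hsx
        obtain ⟨d, hd⟩ := hD.1
        exact ⟨d, hd, ⊥, by simp, bot_le⟩
      · intro F hF G hG
        obtain ⟨d1, hd1, hd1F⟩ := hF {a | WB ((· ≤ ·) : L → L → Prop) a x}
          (dirOn_wbSet x) x hlub ⟨x, rfl, le_rfl⟩
        obtain ⟨d2, hd2, hd2G⟩ := hG {a | WB ((· ≤ ·) : L → L → Prop) a x}
          (dirOn_wbSet x) x hlub ⟨x, rfl, le_rfl⟩
        refine ⟨({d1 ⊔ d2} : Finset L), ?_, ?_, ?_⟩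
        · intro Dset hD s hs hsx
          obtain ⟨f, hf, hfs⟩ := hsx
          have hxs : x ≤ s := Set.mem_singleton_iff.mp hf ▸ hfs
          obtain ⟨e, he, hde⟩ := (wb_sup hd1 hd2) Dset hD s hs hxs
          exact ⟨e, he, d1 ⊔ d2, by simp, hde⟩
        · intro z hz
          obtain ⟨f1, hf1, hle1⟩ := hd1F
          have hz' : z = d1 ⊔ d2 := by simpa using hz
          exact ⟨f1, hf1, hle1.trans (le_sup_left.trans hz'.ge)⟩
        · intro z hz
          obtain ⟨f2, hf2, hle2⟩ := hd2G
          have hz' : z = d1 ⊔ d2 := by simpa using hz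
          exact ⟨f2, hf2, hle2.trans (le_sup_right.trans hz'.ge)⟩
    · ext z
      simp only [Set.mem_iInter]
      constructor
      · rintro ⟨f, hf, hfz⟩ F hF
        have hxz : x ≤ z := Set.mem_singleton_iff.mp hf ▸ hfz
        obtain ⟨d, hd, hdUp⟩ := hF {z} (dirOn_singleton z) z (isLubR_singleton z)
          ⟨x, rfl, hxz⟩
        obtain ⟨f', hf', hle⟩ := hdUp
        exact ⟨f', hf', hle.trans (le_of_eq (Set.mem_singleton_iff.mp hd))⟩
      · intro hz
        refine ⟨x, rfl, ?_⟩
        refine hlub.2 z fun a ha => ?_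
        have hmem : ({a} : Finset L) ∈ FinFam ((· ≤ ·) : L → L → Prop) x := by
          intro Dset hD s hs hsx
          obtain ⟨f, hf, hfs⟩ := hsx
          have hxs : x ≤ s := Set.mem_singleton_iff.mp hf ▸ hfs
          obtain ⟨d, hd, had⟩ := ha Dset hD s hs hxs
          exact ⟨d, hd, a, by simp, had⟩
        obtain ⟨f, hf, hfz⟩ := hz ({a} : Finset L) hmem
        have : f = a := by simpa using hf
        exact this ▸ hfz
  have hCA : ContinuousRel ((· ≤ ·) : L → L → Prop) →
      AlgebraicRel ((· ≤ ·) : L → L → Prop) := by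
    intro hC y
    refine ⟨⟨⟨⊥, bot_wb ⊥, bot_le⟩, ?_⟩, ⟨fun a ha => ha.2, ?_⟩⟩
    · rintro a ⟨ha, hay⟩ b ⟨hb, hby⟩
      exact ⟨a ⊔ b, ⟨compact_sup ha hb, sup_le hay hby⟩, le_sup_left, le_sup_right⟩
    · intro v hv
      by_contra hyv
      have hnall : ¬ ∀ a ∈ {b | WB ((· ≤ ·) : L → L → Prop) b y}, a ≤ v :=
        fun hall => hyv ((hC y).2.2 v hall)
      push_neg at hnall
      obtain ⟨u, hu, huv⟩ := hnall
      exact (no_gap hC hu (fun k hk1 hk2 hkk => huv (hk1.trans (hv k ⟨hkk, hk2⟩)))).elim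
  have hAC : AlgebraicRel ((· ≤ ·) : L → L → Prop) →
      ContinuousRel ((· ≤ ·) : L → L → Prop) := by
    intro hA y
    refine ⟨dirOn_wbSet y, ⟨fun a ha => wb_le ha, ?_⟩⟩
    intro v hv
    refine (hA y).2.2 v ?_
    rintro a ⟨haa, hay⟩
    exact hv a (compact_wb haa hay)
  exact ⟨⟨hQC, hCQ⟩, ⟨hCA, hAC⟩⟩
end
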